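/- Let q ≥ 2 and K a finite field with q elements. For π ⊢ [n], let J_π ⊆ U_n(K) be the set of upper unitriangular matrices A such that A_{ij} ≠ 0 for (i,j) ∈ D(π), A_{ij} = 0 for (i,j) ∈ reg(π)∖D(π), and A_{ij} arbitrary for (i,j) ∈ Sing(π). Then |J_π| = (q−1)^{d(π)} · q^{2dim(π)−2d(π)−crs(π)}. -/

import Mathlib

open scoped BigOperators
open Finset Classical

/-- Two indices lie in the same block of the set partition `P` of `[n]`. -/
def SameBlock {n : ℕ} (P : Finpartition (Finset.univ : Finset (Fin n))) (i j : Fin n) : Prop :=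
  ∃ B ∈ P.parts, i ∈ B ∧ j ∈ B

/-- `(i,j)` is an arc of `P`: same block, `i < j`, no element of that block strictly between. -/
def IsArc {n : ℕ} (P : Finpartition (Finset.univ : Finset (Fin n))) (i j : Fin n) : Prop :=
  i < j ∧ SameBlock P i j ∧ ∀ k : Fin n, i < k → k < j → ¬ SameBlock P i k

/-- The set of arcs `D(π)`. -/
noncomputable def arcs {n : ℕ} (P : Finpartition (Finset.univ : Finset (Fin n))) :
    Finset (Fin n × Fin n) :=
  Finset.univ.filter (fun p => IsArc P p.1 p.2)

/-- `d(π)`, the number of arcs. -/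
noncomputable def dP {n : ℕ} (P : Finpartition (Finset.univ : Finset (Fin n))) : ℕ :=
  (arcs P).card

/-- `dim(π) = Σ_{(i,j) ∈ D(π)} (j - i)`. -/
noncomputable def dimP {n : ℕ} (P : Finpartition (Finset.univ : Finset (Fin n))) : ℕ :=
  ∑ p ∈ arcs P, (p.2.val - p.1.val)

/-- `crs(π)`, the number of crossings, i.e. pairs of arcs `(i,j), (k,l)` with `i<k<j<l`. -/
noncomputable def crsP {n : ℕ} (P : Finpartition (Finset.univ : Finset (Fin n))) : ℕ :=
  (((arcs P) ×ˢ (arcs P)).filter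
    (fun q => q.1.1 < q.2.1 ∧ q.2.1 < q.1.2 ∧ q.1.2 < q.2.2)).card

/-- `(i,j)` is a `π`-singular pair. -/
def SingularPair {n : ℕ} (P : Finpartition (Finset.univ : Finset (Fin n))) (i j : Fin n) : Prop :=
  i < j ∧ ((∃ k : Fin n, k < i ∧ IsArc P k j) ∨ (∃ l : Fin n, j < l ∧ IsArc P i l))

/-- `(i,j)` is a `π`-regular pair. -/
def RegularPair {n : ℕ} (P : Finpartition (Finset.univ : Finset (Fin n))) (i j : Fin n) : Prop :=
  i < j ∧ ¬ ((∃ k : Fin n, k < i ∧ IsArc P k j) ∨ (∃ l : Fin n, j < l ∧ IsArc P i l))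

/-- The set `Sing(π)` of singular pairs. -/
noncomputable def singP {n : ℕ} (P : Finpartition (Finset.univ : Finset (Fin n))) :
    Finset (Fin n × Fin n) :=
  Finset.univ.filter (fun p => SingularPair P p.1 p.2)

/-- The set `reg(π)` of regular pairs. -/
noncomputable def regP {n : ℕ} (P : Finpartition (Finset.univ : Finset (Fin n))) :
    Finset (Fin n × Fin n) :=
  Finset.univ.filter (fun p => RegularPair P p.1 p.2)

/-- The set `J_π` of upper unitriangular matrices with nonzero entries at arcs,
zero entries at regular non-arc pairs, arbitrary entries at singular pairs. -/
noncomputable def Jset {n : ℕ} (K : Type*) [Field K] [Fintype K] [DecidableEq K]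
    (P : Finpartition (Finset.univ : Finset (Fin n))) :
    Finset (Matrix (Fin n) (Fin n) K) :=
  Finset.univ.filter (fun A =>
    (∀ i : Fin n, A i i = 1) ∧
    (∀ i j : Fin n, j < i → A i j = 0) ∧
    (∀ p ∈ arcs P, A p.1 p.2 ≠ 0) ∧
    (∀ i j : Fin n, RegularPair P i j → ¬ IsArc P i j → A i j = 0))

/-!
A matrix of `J_π` is obtained by choosing its entries independently: a nonzero value at each
arc, an arbitrary value at each singular pair, and the forced value `1` or `0` elsewhere, so
`|J_π| = (q - 1)^{d(π)} q^{|Sing(π)|}`. The singular pairs are those lying under an arc `(i, j)`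
at one of its ends, `(m, j)` or `(i, m)` with `i < m < j`; each arc contributes `j - i - 1`
pairs of each kind, and the pairs of both kinds are exactly the `(k, j)` for the crossings
`i < k < j < l`, whence `|Sing(π)| = 2 (dim(π) - d(π)) - crs(π)`.
-/

section

variable {n : ℕ} {P : Finpartition (Finset.univ : Finset (Fin n))}

namespace SameBlock

theorem symm {i j : Fin n} (h : SameBlock P i j) : SameBlock P j i :=
  let ⟨B, hB, hi, hj⟩ := h
  ⟨B, hB, hj, hi⟩

theorem trans {i j k : Fin n} (hij : SameBlock P i j) (hjk : SameBlock P j k) :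
    SameBlock P i k := by
  obtain ⟨B, hB, hi, hj⟩ := hij
  obtain ⟨C, hC, hj', hk⟩ := hjk
  exact ⟨B, hB, hi, P.eq_of_mem_parts hB hC hj hj' ▸ hk⟩

end SameBlock

theorem mem_arcs {p : Fin n × Fin n} : p ∈ arcs P ↔ IsArc P p.1 p.2 := by
  simp [arcs]

theorem mem_singP {p : Fin n × Fin n} : p ∈ singP P ↔ SingularPair P p.1 p.2 := by
  simp [singP]

theorem isArc_leftUnique : Relator.LeftUnique (IsArc P) := by
  intro k k' j h h'
  by_contra hne
  rcases lt_or_gt_of_ne hne with hlt | hlt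
  · exact h.2.2 k' hlt h'.1 (h.2.1.trans h'.2.1.symm)
  · exact h'.2.2 k hlt h.1 (h'.2.1.trans h.2.1.symm)

theorem isArc_rightUnique : Relator.RightUnique (IsArc P) := by
  intro i l l' h h'
  by_contra hne
  rcases lt_or_gt_of_ne hne with hlt | hlt
  · exact h'.2.2 l h.1 hlt h.2.1
  · exact h.2.2 l' h'.1 hlt h'.2.1

theorem IsArc.not_singularPair {i j : Fin n} (h : IsArc P i j) : ¬ SingularPair P i j := by
  rintro ⟨-, ⟨k, hk, hkj⟩ | ⟨l, hl, hil⟩⟩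
  · exact hk.ne (isArc_leftUnique hkj h)
  · exact hl.ne (isArc_rightUnique h hil)

variable (P) in
noncomputable def leftSingular : Finset (Fin n × Fin n) :=
  (arcs P).biUnion fun a => (Ioo a.1 a.2).image (·, a.2)

variable (P) in
noncomputable def rightSingular : Finset (Fin n × Fin n) :=
  (arcs P).biUnion fun a => (Ioo a.1 a.2).image (a.1, ·)

theorem mem_leftSingular {p : Fin n × Fin n} :
    p ∈ leftSingular P ↔ p.1 < p.2 ∧ ∃ k, k < p.1 ∧ IsArc P k p.2 := by
  simp only [leftSingular, mem_biUnion, mem_image, mem_Ioo, mem_arcs]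
  constructor
  · rintro ⟨a, ha, m, ⟨ham, hma⟩, rfl⟩
    exact ⟨hma, a.1, ham, ha⟩
  · rintro ⟨hp, k, hk, hkp⟩
    exact ⟨(k, p.2), hkp, p.1, ⟨hk, hp⟩, rfl⟩

theorem mem_rightSingular {p : Fin n × Fin n} :
    p ∈ rightSingular P ↔ p.1 < p.2 ∧ ∃ l, p.2 < l ∧ IsArc P p.1 l := by
  simp only [rightSingular, mem_biUnion, mem_image, mem_Ioo, mem_arcs]
  constructor
  · rintro ⟨a, ha, m, ⟨ham, hma⟩, rfl⟩
    exact ⟨ham, a.2, hma, ha⟩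
  · rintro ⟨hp, l, hl, hpl⟩
    exact ⟨(p.1, l), hpl, p.2, ⟨hp, hl⟩, rfl⟩

theorem singP_eq_union : singP P = leftSingular P ∪ rightSingular P := by
  ext p
  simp only [mem_singP, mem_union, mem_leftSingular, mem_rightSingular, SingularPair, and_or_left]

variable (P) in
theorem card_leftSingular :
    (leftSingular P).card = ∑ a ∈ arcs P, ((a.2 : ℕ) - a.1 - 1) := by
  rw [leftSingular, card_biUnion]
  · simp only [card_image_of_injective _ (Prod.mk_left_injective _), Fin.card_Ioo]
  · intro a ha b hb hab
    refine disjoint_left.2 ?_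
    simp only [mem_image]
    rintro _ ⟨m, -, rfl⟩ ⟨m', -, he⟩
    have h2 : a.2 = b.2 := (Prod.ext_iff.1 he).2.symm
    exact hab (Prod.ext (isArc_leftUnique (mem_arcs.1 ha) (h2 ▸ mem_arcs.1 hb)) h2)

variable (P) in
theorem card_rightSingular :
    (rightSingular P).card = ∑ a ∈ arcs P, ((a.2 : ℕ) - a.1 - 1) := by
  rw [rightSingular, card_biUnion]
  · simp only [card_image_of_injective _ (Prod.mk_right_injective _), Fin.card_Ioo]
  · intro a ha b hb hab
    refine disjoint_left.2 ?_
    simp only [mem_image]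
    rintro _ ⟨m, -, rfl⟩ ⟨m', -, he⟩
    have h1 : a.1 = b.1 := (Prod.ext_iff.1 he).1.symm
    exact hab (Prod.ext h1 (isArc_rightUnique (mem_arcs.1 ha) (h1 ▸ mem_arcs.1 hb)))

theorem crsP_eq_card_inter : crsP P = (leftSingular P ∩ rightSingular P).card := by
  have himage : leftSingular P ∩ rightSingular P =
      ((arcs P ×ˢ arcs P).filter
        fun c => c.1.1 < c.2.1 ∧ c.2.1 < c.1.2 ∧ c.1.2 < c.2.2).image
        fun c => (c.2.1, c.1.2) := by
    ext p
    simp only [mem_inter, mem_leftSingular, mem_rightSingular, mem_image, mem_filter,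
      mem_product, mem_arcs]
    constructor
    · rintro ⟨⟨hp, k, hk, hkj⟩, -, l, hl, hil⟩
      exact ⟨((k, p.2), (p.1, l)), ⟨⟨hkj, hil⟩, hk, hp, hl⟩, rfl⟩
    · rintro ⟨⟨a, b⟩, ⟨⟨ha, hb⟩, h1, h2, h3⟩, rfl⟩
      exact ⟨⟨h2, a.1, h1, ha⟩, h2, b.2, h3, hb⟩
  rw [himage, card_image_of_injOn, crsP]
  rintro ⟨a, b⟩ hc ⟨a', b'⟩ hc' he
  simp only [coe_filter, Set.mem_ofPred_eq, mem_product, mem_arcs] at hc hc'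
  obtain ⟨hb1, ha2⟩ := Prod.ext_iff.1 he
  dsimp only at hb1 ha2
  exact Prod.ext (Prod.ext (isArc_leftUnique hc.1.1 (ha2 ▸ hc'.1.1)) ha2)
    (Prod.ext hb1 (isArc_rightUnique hc.1.2 (hb1 ▸ hc'.1.2)))

variable (P) in
theorem dimP_eq : dimP P = ∑ a ∈ arcs P, ((a.2 : ℕ) - a.1 - 1) + dP P := by
  rw [dimP, dP, card_eq_sum_ones, ← sum_add_distrib]
  refine sum_congr rfl fun a ha => ?_
  have : (a.1 : ℕ) < a.2 := (mem_arcs.1 ha).1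
  omega

theorem card_singP : (singP P).card = 2 * dimP P - 2 * dP P - crsP P := by
  have := card_union_add_card_inter (leftSingular P) (rightSingular P)
  rw [← singP_eq_union, card_leftSingular, card_rightSingular, ← crsP_eq_card_inter] at this
  rw [dimP_eq]
  omega

noncomputable def allowedEntries (K : Type*) [Zero K] [One K] [Fintype K] [DecidableEq K]
    (P : Finpartition (Finset.univ : Finset (Fin n))) (i j : Fin n) : Finset K :=
  if (i, j) ∈ arcs P then univ.erase 0
  else if (i, j) ∈ singP P then univ
  else if i = j then {1}
  else {0}

section AllowedEntries

variable (K : Type*) [Zero K] [One K] [Fintype K] [DecidableEq K]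

theorem allowedEntries_of_not_mem {i j : Fin n} (ha : (i, j) ∉ arcs P) (hs : (i, j) ∉ singP P) :
    allowedEntries K P i j = if i = j then {1} else {0} := by
  simp [allowedEntries, ha, hs]

theorem card_allowedEntries (i j : Fin n) :
    (allowedEntries K P i j).card =
      (if (i, j) ∈ arcs P then Fintype.card K - 1 else 1) *
        (if (i, j) ∈ singP P then Fintype.card K else 1) := by
  by_cases ha : (i, j) ∈ arcs P
  · have hs : (i, j) ∉ singP P := fun h => (mem_arcs.1 ha).not_singularPair (mem_singP.1 h)
    simp [allowedEntries, ha, hs, card_erase_of_mem]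
  by_cases hs : (i, j) ∈ singP P
  · simp [allowedEntries, ha, hs]
  rw [allowedEntries_of_not_mem K ha hs]
  split_ifs <;> simp [*]

end AllowedEntries

section Jset

variable (K : Type*) [Field K] [Fintype K] [DecidableEq K]

theorem Jset_eq_map_piFinset :
    Jset K P = (Fintype.piFinset fun i => Fintype.piFinset (allowedEntries K P i)).map
      Matrix.of.toEmbedding := by
  have hdiag (i : Fin n) : allowedEntries K P i i = {1} := by
    rw [allowedEntries_of_not_mem K (fun h => (mem_arcs.1 h).1.false)
      (fun h => (mem_singP.1 h).1.false), if_pos rfl]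
  ext A
  simp only [Jset, mem_filter, mem_univ, true_and, mem_map_equiv, Fintype.mem_piFinset,
    Matrix.of_symm_apply]
  constructor
  · rintro ⟨hone, hlower, harc, hreg⟩ i j
    by_cases ha : (i, j) ∈ arcs P
    · simpa [allowedEntries, ha] using harc _ ha
    by_cases hs : (i, j) ∈ singP P
    · simp [allowedEntries, ha, hs]
    rw [allowedEntries_of_not_mem K ha hs]
    rcases lt_trichotomy i j with hij | rfl | hji
    · have hreg_ij : RegularPair P i j := ⟨hij, fun h => hs (mem_singP.2 ⟨hij, h⟩)⟩
      simpa [hij.ne] using hreg i j hreg_ij fun h => ha (mem_arcs.2 h)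
    · simpa using hone i
    · simpa [hji.ne'] using hlower i j hji
  · intro hA
    refine ⟨fun i => by simpa [hdiag] using hA i i, fun i j hji => ?_, fun p hp => ?_,
      fun i j hreg hna => ?_⟩
    · have hna : (i, j) ∉ arcs P := fun h => (mem_arcs.1 h).1.asymm hji
      have hns : (i, j) ∉ singP P := fun h => (mem_singP.1 h).1.asymm hji
      simpa [allowedEntries_of_not_mem K hna hns, hji.ne'] using hA i j
    · simpa [allowedEntries, hp] using hA p.1 p.2
    · have hna : (i, j) ∉ arcs P := mt mem_arcs.1 hna
      have hns : (i, j) ∉ singP P := fun h => hreg.2 (mem_singP.1 h).2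
      simpa [allowedEntries_of_not_mem K hna hns, hreg.1.ne] using hA i j

theorem card_Jset :
    (Jset K P).card = (Fintype.card K - 1) ^ dP P * Fintype.card K ^ (singP P).card := by
  simp only [Jset_eq_map_piFinset, card_map, Fintype.card_piFinset, card_allowedEntries,
    prod_mul_distrib,
    ← Fintype.prod_prod_type (f := fun p : Fin n × Fin n =>
      if p ∈ arcs P then Fintype.card K - 1 else 1),
    ← Fintype.prod_prod_type (f := fun p : Fin n × Fin n =>
      if p ∈ singP P then Fintype.card K else 1),
    prod_ite_mem, univ_inter, prod_const, dP]

end Jset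

end

theorem stmt12 (n q : ℕ) (K : Type*) [Field K] [Fintype K] [DecidableEq K]
    (hK : Fintype.card K = q) (P : Finpartition (Finset.univ : Finset (Fin n))) :
    (Jset K P).card = (q - 1) ^ (dP P) * q ^ (2 * dimP P - 2 * dP P - crsP P) := by
  rw [card_Jset, hK, card_singP]
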